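/- Let λ ≠ 0 and -1 < w < 1 be real constants and consider the phantom scalar field system x' = (1/2)[3(w-1)x³ - 3x(w(y²-1)+y²+1) - √6 λy²], y' = -(1/2)y[-3(w-1)x² + 3(w+1)(y²-1) + √6 λx]. Then: (i) the zeros of the vector field with y ≥ 0 are exactly the origin O=(0,0) and the point C = (-λ/√6, √(1+λ²/6)); (ii) at C one has Ω_φ = y²-x² = 1 and w_eff = -(x²+y²) + w(1+x²-y²) = -1 - λ²/3 < -1 (phantom acceleration); (iii) the Jacobian matrix at C has eigenvalues -(6+λ²)/2 and -(λ²+3(w+1)), both strictly negative, so C is a hyperbolic sink. -/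

import Mathlib

open Polynomial

/-- `x`-component of the phantom scalar field (exponential potential) vector field. -/
noncomputable def p7x (w lam x y : ℝ) : ℝ :=
  1 / 2 * (3 * (w - 1) * x ^ 3 - 3 * x * (w * (y ^ 2 - 1) + y ^ 2 + 1)
    - Real.sqrt 6 * lam * y ^ 2)

/-- `y`-component of the phantom scalar field (exponential potential) vector field. -/
noncomputable def p7y (w lam x y : ℝ) : ℝ :=
  -(1 / 2) * y * (-3 * (w - 1) * x ^ 2 + 3 * (w + 1) * (y ^ 2 - 1) + Real.sqrt 6 * lam * x)

/-- The phantom dominated critical point `C`. -/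
noncomputable def C7 (lam : ℝ) : ℝ × ℝ := (-lam / Real.sqrt 6, Real.sqrt (1 + lam ^ 2 / 6))

/-- Jacobian matrix of the phantom vector field at a point `p`. -/
noncomputable def jac7 (w lam : ℝ) (p : ℝ × ℝ) : Matrix (Fin 2) (Fin 2) ℝ :=
  !![deriv (fun x => p7x w lam x p.2) p.1, deriv (fun y => p7x w lam p.1 y) p.2;
     deriv (fun x => p7y w lam x p.2) p.1, deriv (fun y => p7y w lam p.1 y) p.2]

/-!
On `y = 0` the field reduces to `x' = (3/2)(w-1)x(x²+1)`, so only `O` survives. For `y > 0`,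
adding `x` times the bracket of `y'` to that of `x'` cancels the cubic terms and leaves
`√6 λ (x² - y²) = 6x`; together with the bracket of `y'` this factors as
`(√6 x + λ)(√6 λ x - 3(w+1)) = 0`. The second factor forces `6 λ² y² = 9 (w+1)(w-1) < 0`, and the
first one gives `C`. At `C` the two relations `√6 λ = -6x` and `y² - x² = 1` turn the Jacobian
into a matrix polynomial in `x, y`, whose trace and determinant give the eigenvalues.
-/

theorem Matrix.charpoly_fin_two_eq_mul {R : Type*} [CommRing R] [Nontrivial R]
    (M : Matrix (Fin 2) (Fin 2) R) {a b : R} (htr : M.trace = a + b) (hdet : M.det = a * b) :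
    M.charpoly = (X - C a) * (X - C b) := by
  rw [M.charpoly_fin_two, htr, hdet, C_add, C_mul]
  ring

theorem deriv_cubic (a b c d x : ℝ) :
    deriv (fun x => a * x ^ 3 + b * x ^ 2 + c * x + d) x = 3 * a * x ^ 2 + 2 * b * x + c := by
  have h := ((((hasDerivAt_pow 3 x).const_mul a).add ((hasDerivAt_pow 2 x).const_mul b)).add
    ((hasDerivAt_id' x).const_mul c)).add_const d
  refine h.deriv.trans ?_
  norm_num
  ring

section PhantomField

variable {w lam x y : ℝ}

theorem jac7_eq (p : ℝ × ℝ) : jac7 w lam p =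
    !![3 / 2 * (3 * (w - 1) * p.1 ^ 2 - (w * (p.2 ^ 2 - 1) + p.2 ^ 2 + 1)),
        -(3 * (w + 1) * p.1 + Real.sqrt 6 * lam) * p.2;
      -(1 / 2) * (-6 * (w - 1) * p.1 + Real.sqrt 6 * lam) * p.2,
        -(1 / 2) * (-3 * (w - 1) * p.1 ^ 2 + 3 * (w + 1) * (3 * p.2 ^ 2 - 1)
          + Real.sqrt 6 * lam * p.1)] := by
  obtain ⟨x, y⟩ := p
  have hxx : (fun x => p7x w lam x y) = fun x => 3 / 2 * (w - 1) * x ^ 3 + 0 * x ^ 2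
      + -(3 / 2 * (w * (y ^ 2 - 1) + y ^ 2 + 1)) * x + -(Real.sqrt 6 * lam * y ^ 2 / 2) := by
    funext x; unfold p7x; ring
  have hxy : (fun y => p7x w lam x y) = fun y => 0 * y ^ 3
      + -((3 * (w + 1) * x + Real.sqrt 6 * lam) / 2) * y ^ 2 + 0 * y
      + 3 / 2 * ((w - 1) * x ^ 3 + (w - 1) * x) := by
    funext y; unfold p7x; ring
  have hyx : (fun x => p7y w lam x y) = fun x => 0 * x ^ 3 + 3 / 2 * (w - 1) * y * x ^ 2
      + -(Real.sqrt 6 * lam * y / 2) * x + -(3 / 2 * (w + 1) * (y ^ 2 - 1) * y) := by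
    funext x; unfold p7y; ring
  have hyy : (fun y => p7y w lam x y) = fun y => -(3 / 2 * (w + 1)) * y ^ 3 + 0 * y ^ 2
      + -((-3 * (w - 1) * x ^ 2 - 3 * (w + 1) + Real.sqrt 6 * lam * x) / 2) * y + 0 := by
    funext y; unfold p7y; ring
  simp only [jac7, hxx, hxy, hyx, hyy, deriv_cubic]
  ext i j
  fin_cases i <;> fin_cases j <;> simp <;> ring

theorem jac7_eq_of_phantom_dominated {p : ℝ × ℝ} (hlam : Real.sqrt 6 * lam = -6 * p.1)
    (hΩ : p.2 ^ 2 - p.1 ^ 2 = 1) :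
    jac7 w lam p = !![3 * (w - 2) * p.1 ^ 2 - 3, -3 * (w - 1) * p.1 * p.2;
      3 * w * p.1 * p.2, -3 * (w + 1) * (p.1 ^ 2 + 1)] := by
  rw [jac7_eq, hlam]
  ext i j
  fin_cases i <;> fin_cases j <;> simp
  · linear_combination -3 / 2 * (w + 1) * hΩ
  · ring
  · ring
  · linear_combination 9 / 2 * (w + 1) * hΩ

theorem eq_zero_of_p7x_eq_zero (hw : w ≠ 1) (h : p7x w lam x 0 = 0) : x = 0 := by
  have hfac : (w - 1) * x * (x ^ 2 + 1) = 0 := by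
    unfold p7x at h
    linear_combination 2 / 3 * h
  simpa [sub_ne_zero.2 hw, (by positivity : x ^ 2 + 1 ≠ 0)] using hfac

section PointC

variable (lam)

theorem C7_snd_nonneg : 0 ≤ (C7 lam).2 := Real.sqrt_nonneg _

theorem C7_snd_sq : (C7 lam).2 ^ 2 = 1 + lam ^ 2 / 6 := Real.sq_sqrt (by positivity)

theorem sqrt_six_mul_C7_fst : Real.sqrt 6 * (C7 lam).1 = -lam := by
  simp only [C7]
  field_simp

theorem sqrt_six_mul_eq_C7_fst : Real.sqrt 6 * lam = -6 * (C7 lam).1 := by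
  have h := congrArg (Real.sqrt 6 * ·) (sqrt_six_mul_C7_fst lam)
  simp only [← mul_assoc, Real.mul_self_sqrt (by norm_num : (0 : ℝ) ≤ 6)] at h
  linarith

theorem C7_fst_sq : (C7 lam).1 ^ 2 = lam ^ 2 / 6 := by
  have h := congrArg (· ^ 2) (sqrt_six_mul_C7_fst lam)
  simp only [mul_pow, Real.sq_sqrt (by norm_num : (0 : ℝ) ≤ 6), neg_sq] at h
  linarith

theorem C7_snd_sq_sub_fst_sq : (C7 lam).2 ^ 2 - (C7 lam).1 ^ 2 = 1 := by
  rw [C7_snd_sq, C7_fst_sq]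
  ring

theorem C7_weff : -((C7 lam).1 ^ 2 + (C7 lam).2 ^ 2) + w * (1 + (C7 lam).1 ^ 2 - (C7 lam).2 ^ 2)
    = -1 - lam ^ 2 / 3 := by
  linear_combination (-w - 1) * C7_snd_sq_sub_fst_sq lam - 2 * C7_fst_sq lam

theorem p7x_C7 : p7x w lam (C7 lam).1 (C7 lam).2 = 0 := by
  unfold p7x
  linear_combination -3 / 2 * (w - 1) * (C7 lam).1 * C7_snd_sq_sub_fst_sq lam
    - (C7 lam).2 ^ 2 / 2 * sqrt_six_mul_eq_C7_fst lam

theorem p7y_C7 : p7y w lam (C7 lam).1 (C7 lam).2 = 0 := by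
  unfold p7y
  linear_combination -3 / 2 * (w + 1) * (C7 lam).2 * C7_snd_sq_sub_fst_sq lam
    - (C7 lam).2 * (C7 lam).1 / 2 * sqrt_six_mul_eq_C7_fst lam

theorem trace_jac7_C7 :
    (jac7 w lam (C7 lam)).trace = -((6 + lam ^ 2) / 2) + -(lam ^ 2 + 3 * (w + 1)) := by
  rw [jac7_eq_of_phantom_dominated (sqrt_six_mul_eq_C7_fst lam) (C7_snd_sq_sub_fst_sq lam),
    Matrix.trace_fin_two_of]
  linear_combination -9 * C7_fst_sq lam

theorem det_jac7_C7 :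
    (jac7 w lam (C7 lam)).det = -((6 + lam ^ 2) / 2) * -(lam ^ 2 + 3 * (w + 1)) := by
  rw [jac7_eq_of_phantom_dominated (sqrt_six_mul_eq_C7_fst lam) (C7_snd_sq_sub_fst_sq lam),
    Matrix.det_fin_two_of]
  linear_combination 9 * w * (w - 1) * (C7 lam).1 ^ 2 * C7_snd_sq_sub_fst_sq lam
    + 9 * (2 * ((C7 lam).1 ^ 2 + lam ^ 2 / 6) + w + 3) * C7_fst_sq lam

end PointC

theorem mk_eq_C7 (hx : Real.sqrt 6 * x = -lam) (hy : 0 ≤ y) (hy2 : y ^ 2 = 1 + lam ^ 2 / 6) :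
    (x, y) = C7 lam := by
  refine Prod.ext ?_ ?_
  · simp only [C7]
    field_simp
    linarith
  · rw [C7, ← hy2, Real.sqrt_sq hy]

theorem mk_eq_C7_of_p7_eq_zero (hw1 : -1 < w) (hw2 : w < 1) (hy : 0 < y)
    (h1 : p7x w lam x y = 0) (h2 : p7y w lam x y = 0) : (x, y) = C7 lam := by
  set s := Real.sqrt 6
  have hs : s ^ 2 = 6 := Real.sq_sqrt (by norm_num)
  have hxbr : 3 * (w - 1) * x ^ 3 - 3 * x * (w * (y ^ 2 - 1) + y ^ 2 + 1) - s * lam * y ^ 2 = 0 := by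
    unfold p7x at h1
    linarith
  have hybr : -3 * (w - 1) * x ^ 2 + 3 * (w + 1) * (y ^ 2 - 1) + s * lam * x = 0 := by
    unfold p7y at h2
    have : y * (-3 * (w - 1) * x ^ 2 + 3 * (w + 1) * (y ^ 2 - 1) + s * lam * x) = 0 := by
      linear_combination -2 * h2
    exact (mul_eq_zero.1 this).resolve_left hy.ne'
  have hlin : s * lam * (x ^ 2 - y ^ 2) = 6 * x := by linear_combination hxbr + x * hybr
  have hfactor : (s * x + lam) * (s * lam * x - 3 * (w + 1)) = 0 := by
    linear_combination s * (w + 1) / 2 * hlin + s ^ 2 * lam / 6 * hybr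
      + ((w + 1) * lam / 2 - s * lam ^ 2 * x / 6) * hs
  rcases mul_eq_zero.1 hfactor with hC | hother
  · have hy2 : (w + 1) * (y ^ 2 - (1 + lam ^ 2 / 6)) = 0 := by
      linear_combination hybr / 3 + ((w - 1) / 6 * (s * x - lam) - lam / 3) * hC
        - (w - 1) * x ^ 2 / 6 * hs
    refine mk_eq_C7 (by linarith) hy.le ?_
    linarith [(mul_eq_zero.1 hy2).resolve_left (by linarith)]
  · have hneg : 6 * lam ^ 2 * y ^ 2 = 9 * (w + 1) * (w - 1) := by
      linear_combination -(s * lam) * hlin + (s * lam * x + 3 * (w + 1) - 6) * hother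
        - lam ^ 2 * y ^ 2 * hs
    nlinarith [mul_nonneg (sq_nonneg lam) (sq_nonneg y), mul_pos (by linarith : 0 < w + 1)
      (by linarith : 0 < 1 - w)]

theorem p7_zero_set_eq (hw1 : -1 < w) (hw2 : w < 1) :
    {p : ℝ × ℝ | 0 ≤ p.2 ∧ p7x w lam p.1 p.2 = 0 ∧ p7y w lam p.1 p.2 = 0} = {(0, 0), C7 lam} := by
  ext ⟨x, y⟩
  constructor
  · rintro ⟨hy, h1, h2⟩
    dsimp only at hy h1 h2
    rcases hy.eq_or_lt with rfl | hy
    · exact Or.inl (Prod.ext (eq_zero_of_p7x_eq_zero hw2.ne h1) rfl)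
    · exact Or.inr (mk_eq_C7_of_p7_eq_zero hw1 hw2 hy h1 h2)
  · rintro (h | h) <;> rw [h]
    · simp [p7x, p7y]
    · exact ⟨C7_snd_nonneg lam, p7x_C7 lam, p7y_C7 lam⟩

end PhantomField

/-- Phantom scalar field with exponential potential: the fixed points in `y ≥ 0` are exactly
the origin `O` and the phantom-dominated point `C = (-λ/√6, √(1+λ²/6))`, where `Ω_φ = 1` and
`w_eff = -1-λ²/3 < -1`; the Jacobian at `C` has eigenvalues `-(6+λ²)/2` and `-(λ²+3(w+1))`,
both strictly negative, so `C` is a hyperbolic sink. -/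
theorem phantom_critical_points (w lam : ℝ) (hlam : lam ≠ 0) (hw1 : -1 < w) (hw2 : w < 1) :
    ({p : ℝ × ℝ | 0 ≤ p.2 ∧ p7x w lam p.1 p.2 = 0 ∧ p7y w lam p.1 p.2 = 0}
        = {(0, 0), C7 lam}) ∧
    ((C7 lam).2 ^ 2 - (C7 lam).1 ^ 2 = 1 ∧
      -((C7 lam).1 ^ 2 + (C7 lam).2 ^ 2) + w * (1 + (C7 lam).1 ^ 2 - (C7 lam).2 ^ 2)
        = -1 - lam ^ 2 / 3 ∧
      -1 - lam ^ 2 / 3 < -1) ∧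
    ((jac7 w lam (C7 lam)).charpoly
        = (X - C (-((6 + lam ^ 2) / 2))) * (X - C (-(lam ^ 2 + 3 * (w + 1)))) ∧
      -((6 + lam ^ 2) / 2) < 0 ∧ -(lam ^ 2 + 3 * (w + 1)) < 0) := by
  have hlam2 : 0 < lam ^ 2 := by positivity
  refine ⟨p7_zero_set_eq hw1 hw2, ⟨C7_snd_sq_sub_fst_sq lam, C7_weff lam, by linarith⟩,
    Matrix.charpoly_fin_two_eq_mul _ (trace_jac7_C7 lam) (det_jac7_C7 lam), by linarith,
    by linarith⟩
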